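/- Let A, M ∈ ℂ^{n×n} be linearly independent over ℝ, and let α := arccos( Re⟨A,M⟩_F / (‖A‖_F·‖M‖_F) ) ∈ (0,π) be the angle between them. Define t : [0,1] → [0,1] by t(0) := 0 and, for τ ∈ (0,1], t(τ) := ‖M‖_F / ( ‖M‖_F + ‖A‖_F·( sin α · cot(τα) − cos α ) ). Then t is a bijection of [0,1] onto [0,1], and for every τ ∈ [0,1] the matrix Q_τ := t(τ)·A + (1−t(τ))·M is nonzero and satisfies arccos( Re⟨M,Q_τ⟩_F / (‖M‖_F·‖Q_τ‖_F) ) = τα, i.e., the angle between M and Q_τ equals τα. -/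

import Mathlib

noncomputable section

open Matrix Set

/-- `T_v`: the orthogonal complement of `v` in `ℂ^n`. -/
def Tv {n : ℕ} (v : EuclideanSpace ℂ (Fin n)) : Submodule ℂ (EuclideanSpace ℂ (Fin n)) :=
  (ℂ ∙ v)ᗮ

/-- The linear map `A_{λ,v} : T_v → T_v`, `x ↦ P_{v⊥}((A - λ·Id) x)`. -/
def Alv {n : ℕ} (A : Matrix (Fin n) (Fin n) ℂ) (lam : ℂ) (v : EuclideanSpace ℂ (Fin n)) :
    Tv v →ₗ[ℂ] Tv v :=
  (Submodule.orthogonalProjection (Tv v)).toLinearMap ∘ₗ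
    (Matrix.toEuclideanLin A - lam • LinearMap.id) ∘ₗ (Tv v).subtype

/-- `A_{λ,v}` as a continuous linear map. -/
def AlvC {n : ℕ} (A : Matrix (Fin n) (Fin n) ℂ) (lam : ℂ) (v : EuclideanSpace ℂ (Fin n)) :
    Tv v →L[ℂ] Tv v :=
  LinearMap.toContinuousLinearMap (Alv A lam v)

/-- Frobenius norm of a complex matrix. -/
def frobNorm {n : ℕ} (A : Matrix (Fin n) (Fin n) ℂ) : ℝ :=
  Real.sqrt (∑ i, ∑ j, ‖A i j‖ ^ 2)

/-- The condition number `μ(A,λ,v) = ‖A‖_F ‖A_{λ,v}^{-1}‖`. -/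
def mu {n : ℕ} (A : Matrix (Fin n) (Fin n) ℂ) (lam : ℂ) (v : EuclideanSpace ℂ (Fin n)) : ℝ :=
  frobNorm A * ‖(AlvC A lam v).inverse‖

/-- Fubini-Study (angular) distance. -/
def dP {n : ℕ} (v w : EuclideanSpace ℂ (Fin n)) : ℝ :=
  Real.arccos (‖(inner ℂ v w : ℂ)‖ / (‖v‖ * ‖w‖))

/-- The distance on triples. -/
def distT {n : ℕ} (A : Matrix (Fin n) (Fin n) ℂ) (lam : ℂ) (v : EuclideanSpace ℂ (Fin n))
    (A' : Matrix (Fin n) (Fin n) ℂ) (lam' : ℂ) (v' : EuclideanSpace ℂ (Fin n)) : ℝ :=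
  Real.sqrt ((frobNorm ((frobNorm A)⁻¹ • A - (frobNorm A')⁻¹ • A')) ^ 2 +
    ‖lam / (frobNorm A : ℂ) - lam' / (frobNorm A' : ℂ)‖ ^ 2 + dP v v' ^ 2)

/-- The Frobenius Hermitian inner product `⟨A,B⟩_F = trace(B* A) = Σ a_ij conj(b_ij)`. -/
def frobInner {n : ℕ} (A B : Matrix (Fin n) (Fin n) ℂ) : ℂ :=
  ∑ i, ∑ j, A i j * (starRingEnd ℂ) (B i j)

/-!
For `x, y` at angle `α ∈ (0, π)` in a real inner product space, the spherical interpolant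
`v θ = ‖y‖ sin θ • x + ‖x‖ sin (α - θ) • y` has norm `‖x‖ ‖y‖ sin α` and inner product
`‖x‖ ‖y‖² sin α cos θ` with `y`, so `∠(y, v θ) = θ` for `θ ∈ [0, π]`. Once the cotangent in `t` is
cleared, `Q_τ` is a positive multiple of `v (τα)`, whence `∠(M, Q_τ) = τα`. In particular `t` is
injective on `[0, 1]`, and continuity with `t 0 = 0`, `t 1 = 1` makes it onto. The Frobenius inner
product is the Euclidean one on `ℂ^(n×n)`, viewed as a real inner product space.
-/

open InnerProductGeometry Real
open scoped InnerProductSpace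

section Frobenius

variable {ι κ : Type*}

def Matrix.frobeniusLinearEquiv : Matrix ι κ ℂ ≃ₗ[ℝ] EuclideanSpace ℂ (ι × κ) :=
  (LinearEquiv.curry ℝ ℂ ι κ).symm.trans (WithLp.linearEquiv 2 ℝ (ι × κ → ℂ)).symm

theorem Matrix.frobeniusLinearEquiv_apply (A : Matrix ι κ ℂ) (p : ι × κ) :
    Matrix.frobeniusLinearEquiv A p = A p.1 p.2 :=
  rfl

theorem frobNorm_eq_norm_frobeniusLinearEquiv {n : ℕ} (A : Matrix (Fin n) (Fin n) ℂ) :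
    frobNorm A = ‖Matrix.frobeniusLinearEquiv A‖ := by
  simp only [EuclideanSpace.norm_eq, frobNorm, Fintype.sum_prod_type,
    Matrix.frobeniusLinearEquiv_apply]

theorem re_frobInner_eq_inner_frobeniusLinearEquiv {n : ℕ} (A B : Matrix (Fin n) (Fin n) ℂ) :
    (frobInner A B).re =
      ⟪Matrix.frobeniusLinearEquiv A, Matrix.frobeniusLinearEquiv B⟫_ℝ := by
  rw [PiLp.inner_apply, Fintype.sum_prod_type, frobInner, Complex.re_sum]
  refine Finset.sum_congr rfl fun i _ => ?_
  rw [Complex.re_sum]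
  refine Finset.sum_congr rfl fun j _ => ?_
  simp only [Matrix.frobeniusLinearEquiv_apply, Complex.inner, Complex.mul_re, Complex.conj_re,
    Complex.conj_im]
  ring

end Frobenius

theorem smul_add_one_sub_smul_ne_zero {R M : Type*} [Ring R] [Nontrivial R] [AddCommGroup M]
    [Module R M] {x y : M} (h : LinearIndependent R ![x, y]) (t : R) :
    t • x + (1 - t) • y ≠ 0 := fun h0 => by
  obtain ⟨ht, ht'⟩ := LinearIndependent.pair_iff.1 h _ _ h0
  simp [ht] at ht'

theorem div_smul_add_one_sub_div_smul {K M : Type*} [Field K] [AddCommGroup M] [Module K M]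
    (x y : M) {p q : K} (hpq : p + q ≠ 0) :
    (p / (p + q)) • x + (1 - p / (p + q)) • y = (p + q)⁻¹ • (p • x + q • y) := by
  rw [one_sub_div hpq, add_sub_cancel_left, smul_add, smul_smul, smul_smul, div_eq_inv_mul,
    div_eq_inv_mul]

/-- The paper's `t(τ)`, with the cotangent cleared. -/
def angleParam (a m α τ : ℝ) : ℝ :=
  m * sin (τ * α) / (m * sin (τ * α) + a * sin (α - τ * α))

theorem angleParam_eq_of_sin_ne_zero {a m α τ : ℝ} (hs : sin (τ * α) ≠ 0) :
    angleParam a m α τ = m / (m + a * (sin α * (cos (τ * α) / sin (τ * α)) - cos α)) := by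
  rw [angleParam, sin_sub]
  field_simp

section AngleParam

variable {a m α τ : ℝ}

theorem sin_mul_nonneg_of_mem_Icc (hα₀ : 0 ≤ α) (hαπ : α ≤ π) (hτ : τ ∈ Icc (0 : ℝ) 1) :
    0 ≤ sin (τ * α) :=
  sin_nonneg_of_nonneg_of_le_pi (mul_nonneg hτ.1 hα₀) (by nlinarith [hτ.2])

theorem sin_sub_mul_nonneg_of_mem_Icc (hα₀ : 0 ≤ α) (hαπ : α ≤ π) (hτ : τ ∈ Icc (0 : ℝ) 1) :
    0 ≤ sin (α - τ * α) :=
  sin_nonneg_of_nonneg_of_le_pi (by nlinarith [hτ.2]) (by nlinarith [hτ.1])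

theorem angleParam_denom_pos (ha : 0 < a) (hm : 0 < m) (hα₀ : 0 < α) (hαπ : α < π)
    (hτ : τ ∈ Icc (0 : ℝ) 1) : 0 < m * sin (τ * α) + a * sin (α - τ * α) := by
  have hs := sin_mul_nonneg_of_mem_Icc hα₀.le hαπ.le hτ
  have hs' := sin_sub_mul_nonneg_of_mem_Icc hα₀.le hαπ.le hτ
  rcases hτ.1.eq_or_lt with rfl | hτ₀
  · simpa using mul_pos ha (sin_pos_of_pos_of_lt_pi hα₀ hαπ)
  · have := sin_pos_of_pos_of_lt_pi (mul_pos hτ₀ hα₀) (by nlinarith [hτ.2])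
    positivity

theorem ite_eq_angleParam (hα₀ : 0 < α) (hαπ : α < π) (hτ : τ ∈ Icc (0 : ℝ) 1) :
    (if τ = 0 then 0 else m / (m + a * (sin α * (cos (τ * α) / sin (τ * α)) - cos α))) =
      angleParam a m α τ := by
  split_ifs with hτ₀
  · simp [angleParam, hτ₀]
  · refine (angleParam_eq_of_sin_ne_zero (sin_pos_of_pos_of_lt_pi ?_ ?_).ne').symm
    · exact mul_pos (hτ.1.lt_of_ne' hτ₀) hα₀
    · nlinarith [hτ.2]

end AngleParam

namespace InnerProductGeometry

variable {V : Type*} [NormedAddCommGroup V] [InnerProductSpace ℝ V]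

theorem angle_pos_of_linearIndependent {x y : V} (h : LinearIndependent ℝ ![x, y]) :
    0 < angle x y := by
  refine (angle_nonneg x y).lt_of_ne' fun h0 => ?_
  obtain ⟨-, r, -, rfl⟩ := angle_eq_zero_iff.1 h0
  simpa using (LinearIndependent.pair_iff.1 h r (-1) (by simp)).2

theorem angle_lt_pi_of_linearIndependent {x y : V} (h : LinearIndependent ℝ ![x, y]) :
    angle x y < π := by
  refine (angle_le_pi x y).lt_of_ne fun hπ => ?_
  obtain ⟨-, r, -, rfl⟩ := angle_eq_pi_iff.1 hπ
  simpa using (LinearIndependent.pair_iff.1 h r (-1) (by simp)).2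

theorem inner_smul_add_smul_sin (x y : V) (θ : ℝ) :
    ⟪y, (‖y‖ * sin θ) • x + (‖x‖ * sin (angle x y - θ)) • y⟫_ℝ =
      ‖x‖ * ‖y‖ ^ 2 * sin (angle x y) * cos θ := by
  rw [inner_add_right, real_inner_smul_right, real_inner_smul_right, real_inner_comm,
    ← cos_angle_mul_norm_mul_norm, real_inner_self_eq_norm_sq, sin_sub]
  ring

theorem norm_smul_add_smul_sin (x y : V) (θ : ℝ) :
    ‖(‖y‖ * sin θ) • x + (‖x‖ * sin (angle x y - θ)) • y‖ = ‖x‖ * ‖y‖ * sin (angle x y) := by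
  have hsin := sin_angle_nonneg x y
  refine (pow_left_inj₀ (norm_nonneg _) (by positivity) two_ne_zero).1 ?_
  rw [norm_add_sq_real, norm_smul, norm_smul, real_inner_smul_left, real_inner_smul_right,
    ← cos_angle_mul_norm_mul_norm, sin_sub, Real.norm_eq_abs, Real.norm_eq_abs, mul_pow, mul_pow,
    sq_abs, sq_abs]
  linear_combination (‖x‖ ^ 2 * ‖y‖ ^ 2) *
    (sin (angle x y) ^ 2 * sin_sq_add_cos_sq θ - sin θ ^ 2 * sin_sq_add_cos_sq (angle x y))

theorem angle_smul_add_smul_sin {x y : V} (h : LinearIndependent ℝ ![x, y]) {θ : ℝ}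
    (hθ₀ : 0 ≤ θ) (hθπ : θ ≤ π) :
    angle y ((‖y‖ * sin θ) • x + (‖x‖ * sin (angle x y - θ)) • y) = θ := by
  have hx : x ≠ 0 := by simpa using h.ne_zero 0
  have hy : y ≠ 0 := by simpa using h.ne_zero 1
  have hsin := sin_pos_of_pos_of_lt_pi (angle_pos_of_linearIndependent h)
    (angle_lt_pi_of_linearIndependent h)
  rw [angle, inner_smul_add_smul_sin, norm_smul_add_smul_sin]
  convert arccos_cos hθ₀ hθπ using 2
  field_simp

theorem angleParam_denom_pos_of_linearIndependent {x y : V} (h : LinearIndependent ℝ ![x, y])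
    {τ : ℝ}
    (hτ : τ ∈ Icc (0 : ℝ) 1) :
    0 < ‖y‖ * sin (τ * angle x y) + ‖x‖ * sin (angle x y - τ * angle x y) :=
  angleParam_denom_pos (norm_pos_iff.2 (by simpa using h.ne_zero 0))
    (norm_pos_iff.2 (by simpa using h.ne_zero 1)) (angle_pos_of_linearIndependent h)
    (angle_lt_pi_of_linearIndependent h) hτ

theorem angle_smul_add_one_sub_smul_angleParam {x y : V} (h : LinearIndependent ℝ ![x, y])
    {τ : ℝ}
    (hτ : τ ∈ Icc (0 : ℝ) 1) :
    angle y (angleParam ‖x‖ ‖y‖ (angle x y) τ • x + (1 - angleParam ‖x‖ ‖y‖ (angle x y) τ) • y) =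
      τ * angle x y := by
  have hα₀ := angle_pos_of_linearIndependent h
  have hd := angleParam_denom_pos_of_linearIndependent h hτ
  rw [angleParam, div_smul_add_one_sub_div_smul x y hd.ne',
    angle_smul_right_of_pos _ _ (inv_pos.2 hd),
    angle_smul_add_smul_sin h (mul_nonneg hτ.1 hα₀.le) (by nlinarith [hτ.2, angle_le_pi x y])]

theorem bijOn_angleParam {x y : V} (h : LinearIndependent ℝ ![x, y]) :
    BijOn (angleParam ‖x‖ ‖y‖ (angle x y)) (Icc 0 1) (Icc 0 1) := by
  have hα₀ := angle_pos_of_linearIndependent h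
  have hαπ := angle_lt_pi_of_linearIndependent h
  have hd τ (hτ : τ ∈ Icc (0 : ℝ) 1) := angleParam_denom_pos_of_linearIndependent h hτ
  refine ⟨fun τ hτ => ⟨?_, ?_⟩, fun τ₁ hτ₁ τ₂ hτ₂ heq => ?_, ?_⟩
  · have := sin_mul_nonneg_of_mem_Icc hα₀.le hαπ.le hτ
    exact div_nonneg (by positivity) (hd τ hτ).le
  · have := sin_sub_mul_nonneg_of_mem_Icc hα₀.le hαπ.le hτ
    rw [angleParam, div_le_one (hd τ hτ)]
    nlinarith [norm_nonneg x]
  · have h₁ := angle_smul_add_one_sub_smul_angleParam h hτ₁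
    have h₂ := angle_smul_add_one_sub_smul_angleParam h hτ₂
    rw [heq, h₂] at h₁
    exact mul_right_cancel₀ hα₀.ne' h₁.symm
  · have hcont : ContinuousOn (angleParam ‖x‖ ‖y‖ (angle x y)) (Icc 0 1) :=
      (by fun_prop : Continuous fun τ => ‖y‖ * sin (τ * angle x y)).continuousOn.div
        (by fun_prop) fun τ hτ => (hd τ hτ).ne'
    have hd₁ := hd 1 ⟨zero_le_one, le_rfl⟩
    rw [one_mul, sub_self, sin_zero, mul_zero, add_zero] at hd₁
    have h01 := intermediate_value_Icc zero_le_one hcont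
    rwa [angleParam, angleParam, zero_mul, sin_zero, mul_zero, zero_div, one_mul, sub_self,
      sin_zero, mul_zero, add_zero, div_self hd₁.ne'] at h01

end InnerProductGeometry

/-- Proposition: reparameterization of the segment `[M,A]` by the angle. -/
theorem segment_angle_parameterization {n : ℕ} (A M : Matrix (Fin n) (Fin n) ℂ)
    (hind : LinearIndependent ℝ ![A, M]) :
    0 < Real.arccos ((frobInner A M).re / (frobNorm A * frobNorm M)) ∧
    Real.arccos ((frobInner A M).re / (frobNorm A * frobNorm M)) < Real.pi ∧
    (let α : ℝ := Real.arccos ((frobInner A M).re / (frobNorm A * frobNorm M));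
     let t : ℝ → ℝ := fun τ =>
       if τ = 0 then 0 else
         frobNorm M /
           (frobNorm M + frobNorm A *
             (Real.sin α * (Real.cos (τ * α) / Real.sin (τ * α)) - Real.cos α));
     Set.BijOn t (Set.Icc 0 1) (Set.Icc 0 1) ∧
       ∀ τ ∈ Set.Icc (0 : ℝ) 1,
         t τ • A + (1 - t τ) • M ≠ 0 ∧
         Real.arccos ((frobInner M (t τ • A + (1 - t τ) • M)).re /
             (frobNorm M * frobNorm (t τ • A + (1 - t τ) • M))) = τ * α) := by
  set x := Matrix.frobeniusLinearEquiv A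
  set y := Matrix.frobeniusLinearEquiv M
  have hxy : LinearIndependent ℝ ![x, y] := by
    have := hind.map' _ (Matrix.frobeniusLinearEquiv (ι := Fin n) (κ := Fin n)).ker
    rwa [show _ ∘ ![A, M] = ![x, y] from funext fun i => by fin_cases i <;> rfl] at this
  have hα₀ := angle_pos_of_linearIndependent hxy
  have hαπ := angle_lt_pi_of_linearIndependent hxy
  have ht τ (hτ : τ ∈ Icc (0 : ℝ) 1) := ite_eq_angleParam (a := ‖x‖) (m := ‖y‖) hα₀ hαπ hτ
  simp only [re_frobInner_eq_inner_frobeniusLinearEquiv, frobNorm_eq_norm_frobeniusLinearEquiv,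
    map_add, map_smul]
  refine ⟨hα₀, hαπ, (bijOn_angleParam hxy).congr fun τ hτ => (ht τ hτ).symm,
    fun τ hτ => ⟨smul_add_one_sub_smul_ne_zero hind _, ?_⟩⟩
  have := angle_smul_add_one_sub_smul_angleParam hxy hτ
  rwa [← ht τ hτ] at this
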